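/- Let l ≥ 1 be an integer, let w be chosen uniformly at random from {0,1}^l, and let x = x_1…x_n be generated by a Bernoulli process with P(0) = p ∈ (0,1), independently of w. Set v_{1-l}…v_0 = w and v_1…v_n = φ_{l,w}(x). Then for every index i with 1 ≤ i ≤ n and every word g = g_1…g_{l+1} ∈ {0,1}^{l+1}, the probability that v_{i-l} v_{i-l+1} … v_i = g equals 2^{-l} · p if Σ_{j=1}^{l+1} g_j is even, and equals 2^{-l} · (1 − p) if Σ_{j=1}^{l+1} g_j is odd. -/

import Mathlib

/-- Parity of a list of bits (`true` ↔ an odd number of `true`s, i.e. odd sum). -/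
def parity (L : List Bool) : Bool := L.foldr Bool.xor false

/-- The sequence `w_1 … w_l v_1 … v_m` (as a list) produced by the two-faced
transformation `φ_{l,w}`: the first `w.length` entries are the word `w`, and each
subsequent entry is `v_i = x_i` if the sum of the preceding `w.length` entries is even,
and `v_i = 1 - x_i` if it is odd (bits are booleans, `true` ↔ 1, so flipping is `xor true`). -/
def phiList (w : List Bool) (x : ℕ → Bool) : ℕ → List Bool
  | 0 => w
  | m + 1 => phiList w x m ++ [Bool.xor (x m) (parity ((phiList w x m).drop m))]

/-- The full transformed sequence `v_{1-l} … v_0 v_1 … v_n` indexed by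
absolute positions `0, …, l + n - 1` (position `k` holds `v_{k-l+1}`). -/
def vFull (l n : ℕ) (w : Fin l → Bool) (x : Fin n → Bool) (k : ℕ) : Bool :=
  (phiList (List.ofFn w) (fun m => if h : m < n then x ⟨m, h⟩ else false) n).getD k false

/-- The two-faced transformation `φ_{l,w} : {0,1}^n → {0,1}^n`. -/
def phi (l n : ℕ) (w : Fin l → Bool) (x : Fin n → Bool) : Fin n → Bool :=
  fun i => vFull l n w x (l + i)

open scoped Classical

/-- The probability of the outcome `ω = (w, x)` when `w` is uniform on `{0,1}^l` and
`x_1 … x_n` are i.i.d. letters, each equal to `0` (i.e. `false`) with probability `p`. -/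
noncomputable def probWX (l n : ℕ) (p : ℝ) (ω : (Fin l → Bool) × (Fin n → Bool)) : ℝ :=
  ((2 : ℝ) ^ l)⁻¹ * ∏ i, (if ω.2 i then 1 - p else p)

/-! ### Auxiliary lemmas -/

@[simp] lemma parity_nil : parity [] = false := rfl
@[simp] lemma parity_cons (a : Bool) (L : List Bool) :
    parity (a :: L) = Bool.xor a (parity L) := rfl

lemma parity_append (L M : List Bool) :
    parity (L ++ M) = Bool.xor (parity L) (parity M) := by
  induction L with
  | nil => simp
  | cons a L ih => simp [ih, Bool.xor_assoc]

lemma parity_concat (L : List Bool) (b : Bool) :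
    parity (L.concat b) = Bool.xor (parity L) b := by
  simp [List.concat_eq_append, parity_append]

lemma parity_ofFn_succ {m : ℕ} (f : Fin (m + 1) → Bool) :
    parity (List.ofFn f) = Bool.xor (f 0) (parity (List.ofFn fun j : Fin m => f j.succ)) := by
  rw [List.ofFn_succ]; rfl

lemma parity_ofFn_succ' {m : ℕ} (f : Fin (m + 1) → Bool) :
    parity (List.ofFn f)
      = Bool.xor (parity (List.ofFn fun j : Fin m => f j.castSucc)) (f (Fin.last m)) := by
  rw [List.ofFn_succ', parity_concat]

lemma parity_true_iff (L : List Bool) :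
    parity L = true ↔ Odd (L.map (fun b => if b then (1 : ℕ) else 0)).sum := by
  induction L with
  | nil => simp
  | cons a L ih =>
    cases a <;> simp [Nat.odd_add_one, Nat.add_comm 1, ← Nat.not_odd_iff_even, ← ih]

lemma phiList_length (w : List Bool) (x : ℕ → Bool) (m : ℕ) :
    (phiList w x m).length = w.length + m := by
  induction m with
  | zero => rfl
  | succ m ih => simp [phiList, ih]; omega

lemma phiList_prefix (w : List Bool) (x : ℕ → Bool) {m m' : ℕ} (h : m ≤ m') :
    phiList w x m <+: phiList w x m' := by
  induction m' with
  | zero => simp_all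
  | succ m' ih =>
    rcases Nat.lt_or_ge m (m' + 1) with h' | h'
    · exact (ih (by omega)).trans ⟨_, rfl⟩
    · have : m = m' + 1 := by omega
      subst this; exact List.prefix_rfl

lemma phiList_getD_stable (w : List Bool) (x : ℕ → Bool) {m m' k : ℕ} (h : m ≤ m')
    (hk : k < w.length + m) :
    (phiList w x m').getD k false = (phiList w x m).getD k false := by
  obtain ⟨t, ht⟩ := phiList_prefix w x h
  rw [← ht, List.getD_append _ _ _ _ (by rw [phiList_length]; exact hk)]

section VFull

variable (l n : ℕ) (w : Fin l → Bool) (x : Fin n → Bool)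

def xext : ℕ → Bool := fun m => if h : m < n then x ⟨m, h⟩ else false

lemma vFull_def (k : ℕ) :
    vFull l n w x k = (phiList (List.ofFn w) (xext n x) n).getD k false := rfl

lemma vFull_lt {k : ℕ} (hk : k < l) : vFull l n w x k = w ⟨k, hk⟩ := by
  rw [vFull_def, phiList_getD_stable _ _ (Nat.zero_le n) (by simp [phiList]; omega)]
  show (List.ofFn w).getD k false = _
  rw [List.getD_eq_getElem _ _ (by simp [hk]), List.getElem_ofFn]

lemma phiList_drop (m : ℕ) (hm : m ≤ n) :
    (phiList (List.ofFn w) (xext n x) m).drop m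
      = List.ofFn (fun j : Fin l => vFull l n w x (m + j)) := by
  apply List.ext_getElem
  · simp [phiList_length]
  · intro j h1 h2
    rw [List.getElem_drop, List.getElem_ofFn]
    have hlen : (phiList (List.ofFn w) (xext n x) m).length = l + m := by
      simp [phiList_length]
    have hj : j < l := by simpa [hlen] using h1
    rw [← List.getD_eq_getElem _ false (by omega), vFull_def,
      phiList_getD_stable _ _ hm (by simp; omega)]

lemma vFull_add {m : ℕ} (hm : m < n) :
    vFull l n w x (l + m)
      = Bool.xor (xext n x m) (parity (List.ofFn fun j : Fin l => vFull l n w x (m + j))) := by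
  rw [vFull_def, phiList_getD_stable _ _ (show m + 1 ≤ n by omega) (by simp; try omega)]
  show (phiList (List.ofFn w) (xext n x) m ++ [_]).getD (l + m) false = _
  have hlen : (phiList (List.ofFn w) (xext n x) m).length = l + m := by
    simp [phiList_length]
  rw [List.getD_eq_getElem _ _ (by simp [hlen]),
    List.getElem_concat_length hlen.symm, phiList_drop l n w x m (by omega)]

lemma xext_parity {m : ℕ} (hm : m < n) :
    xext n x m = parity (List.ofFn fun j : Fin (l + 1) => vFull l n w x (m + j)) := by
  rw [parity_ofFn_succ']
  have h1 : (fun j : Fin l => vFull l n w x (m + (j.castSucc : Fin (l+1))))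
      = fun j : Fin l => vFull l n w x (m + j) := rfl
  have h2 : m + ((Fin.last l : Fin (l+1)) : ℕ) = l + m := by (simp [Fin.last]; try omega)
  rw [h1, h2, vFull_add l n w x hm]
  generalize xext n x m = a
  generalize parity _ = P
  cases a <;> cases P <;> rfl

lemma vFull_rec {m : ℕ} (hm : m < n) :
    vFull l n w x m
      = Bool.xor (xext n x m) (parity (List.ofFn fun j : Fin l => vFull l n w x (m + 1 + j))) := by
  have h := xext_parity l n w x hm
  rw [parity_ofFn_succ] at h
  have h0 : m + ((0 : Fin (l+1)) : ℕ) = m := by simp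
  have h1 : (fun j : Fin l => vFull l n w x (m + (j.succ : Fin (l+1))))
      = fun j : Fin l => vFull l n w x (m + 1 + j) := by
    funext j
    congr 1
    (simp [Fin.val_succ]; try omega)
  rw [h0, h1] at h
  rw [h]
  generalize vFull l n w x m = a
  generalize parity _ = P
  cases a <;> cases P <;> rfl

end VFull

/-! ### Reconstruction of the past from the window -/

def recV (l i1 : ℕ) (g x : ℕ → Bool) (k : ℕ) : Bool :=
  if h : i1 ≤ k then g (k - i1)
  else Bool.xor (x k) (parity (List.ofFn fun j : Fin l => recV l i1 g x (k + 1 + j)))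
termination_by i1 - k
decreasing_by omega

lemma recV_ge {l i1 : ℕ} {g x : ℕ → Bool} {k : ℕ} (h : i1 ≤ k) :
    recV l i1 g x k = g (k - i1) := by
  rw [recV, dif_pos h]

lemma recV_lt {l i1 : ℕ} {g x : ℕ → Bool} {k : ℕ} (h : k < i1) :
    recV l i1 g x k
      = Bool.xor (x k) (parity (List.ofFn fun j : Fin l => recV l i1 g x (k + 1 + j))) := by
  rw [recV, dif_neg (by omega)]

section Main

variable {l n : ℕ} {i1 : ℕ} {g : ℕ → Bool}

/-- On the event, `recV` recovers the whole past of the sequence. -/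
lemma recV_eq_vFull (w : Fin l → Bool) (x : Fin n → Bool)
    (hi1 : i1 + 1 ≤ n)
    (hw : ∀ j < l + 1, vFull l n w x (i1 + j) = g j) :
    ∀ k, k ≤ i1 + l → recV l i1 g (xext n x) k = vFull l n w x k := by
  have main : ∀ t, ∀ k, i1 - k ≤ t → k ≤ i1 + l →
      recV l i1 g (xext n x) k = vFull l n w x k := by
    intro t
    induction t with
    | zero =>
      intro k hk hk2
      have h1 : i1 ≤ k := by omega
      rw [recV_ge h1]
      have := hw (k - i1) (by omega)
      rw [show i1 + (k - i1) = k by omega] at this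
      exact this.symm
    | succ t ih =>
      intro k hk hk2
      rcases Nat.lt_or_ge k i1 with h | h
      · rw [recV_lt h]
        have harg : (fun j : Fin l => recV l i1 g (xext n x) (k + 1 + j))
            = fun j : Fin l => vFull l n w x (k + 1 + j) := by
          funext j
          exact ih _ (by omega) (by omega)
        rw [harg, ← vFull_rec l n w x (show k < n by omega)]
      · rw [recV_ge h]
        have := hw (k - i1) (by omega)
        rw [show i1 + (k - i1) = k by omega] at this
        exact this.symm
  exact fun k hk => main (i1 - k) k le_rfl hk

/-- Conversely, given `x` with the forced value at `i1`, the reconstructed `w`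
produces a sequence whose window at `i1` is `g`. -/
lemma vFull_eq_recV (x : Fin n → Bool) (hi1 : i1 + 1 ≤ n)
    (hc : xext n x i1 = parity (List.ofFn fun j : Fin (l + 1) => g j)) :
    ∀ k, k ≤ i1 + l →
      vFull l n (fun kk : Fin l => recV l i1 g (xext n x) kk) x k
        = recV l i1 g (xext n x) k := by
  set w : Fin l → Bool := fun kk : Fin l => recV l i1 g (xext n x) kk with hwdef
  -- the parity relation for recV windows
  have hA : ∀ m, m ≤ i1 →
      xext n x m = parity (List.ofFn fun j : Fin (l + 1) => recV l i1 g (xext n x) (m + j)) := by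
    intro m hm
    rcases Nat.lt_or_ge m i1 with h | h
    · rw [parity_ofFn_succ]
      have h0 : m + ((0 : Fin (l + 1)) : ℕ) = m := by simp
      have h1 : (fun j : Fin l => recV l i1 g (xext n x) (m + (j.succ : Fin (l + 1))))
          = fun j : Fin l => recV l i1 g (xext n x) (m + 1 + j) := by
        funext j; congr 1; (simp [Fin.val_succ]; try omega)
      rw [h0, h1, recV_lt h]
      generalize xext n x m = a
      generalize parity _ = P
      cases a <;> cases P <;> rfl
    · have hm' : m = i1 := by omega
      subst hm'
      rw [hc]
      congr 1
      congr 1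
      funext j
      rw [recV_ge (by omega), show m + (j : ℕ) - m = (j : ℕ) by omega]
  -- upward induction
  have main : ∀ k, k ≤ i1 + l →
      vFull l n w x k = recV l i1 g (xext n x) k := by
    intro k
    induction k using Nat.strong_induction_on with
    | _ k ih =>
      intro hk
      rcases Nat.lt_or_ge k l with h | h
      · rw [vFull_lt l n w x h]
      · have hmn : k - l < n := by omega
        have hklm : k = l + (k - l) := by omega
        set m := k - l with hm
        rw [hklm, vFull_add l n w x hmn]
        have harg : (fun j : Fin l => vFull l n w x (m + j))
            = fun j : Fin l => recV l i1 g (xext n x) (m + j) := by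
          funext j
          exact ih (m + j) (by omega) (by omega)
        rw [harg]
        have hAm := hA m (by omega)
        rw [parity_ofFn_succ'] at hAm
        have h1 : (fun j : Fin l => recV l i1 g (xext n x) (m + ((j.castSucc : Fin (l+1)) : ℕ)))
            = fun j : Fin l => recV l i1 g (xext n x) (m + j) := rfl
        have h2 : m + ((Fin.last l : Fin (l + 1)) : ℕ) = l + m := by
          (simp [Fin.last]; try omega)
        rw [h1, h2] at hAm
        rw [hAm]
        generalize recV l i1 g (xext n x) (l + m) = a
        generalize parity _ = P
        cases a <;> cases P <;> rfl
  exact main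

end Main

/-- Let `l ≥ 1`, let `w` be uniform on `{0,1}^l`, and let `x = x_1…x_n` be an independent
Bernoulli sequence with `P(0) = p ∈ (0,1)`.  Set `v_{1-l}…v_0 = w`, `v_1…v_n = φ_{l,w}(x)`
(absolute position `k ∈ {0,…,l+n-1}` of `vFull` holds `v_{k-l+1}`, so the word
`v_{i-l} … v_i`, for a paper index `i ∈ {1,…,n}`, occupies absolute positions
`i-1, i, …, i-1+l`).  Then for every `i ∈ {1,…,n}` and every word `g = g_1…g_{l+1}`
of `l+1` letters, the probability that `v_{i-l} v_{i-l+1} … v_i = g` equals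
`2^{-l}·p` if `Σ_j g_j` is even and `2^{-l}·(1-p)` if it is odd. -/
theorem word_of_length_l_succ_prob (l n : ℕ) (hl : 1 ≤ l) (p : ℝ)
    (hp : p ∈ Set.Ioo (0 : ℝ) 1) (i : ℕ) (hi1 : 1 ≤ i) (hi2 : i ≤ n) (g : ℕ → Bool) :
    (∑ ω ∈ Finset.univ.filter
        (fun ω : (Fin l → Bool) × (Fin n → Bool) =>
          ∀ j < l + 1, vFull l n ω.1 ω.2 (i - 1 + j) = g j),
        probWX l n p ω) =
      (if Even (∑ j ∈ Finset.range (l + 1), (if g j then 1 else 0 : ℕ)) then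
        ((2 : ℝ) ^ l)⁻¹ * p else ((2 : ℝ) ^ l)⁻¹ * (1 - p)) := by
  have hi : i - 1 < n := by omega
  have hi1n : i - 1 + 1 ≤ n := by omega
  set c₀ : Bool := parity (List.ofFn fun j : Fin (l + 1) => g j) with hc₀
  set d : Fin l → Bool := fun _ => false with hd
  set i0 : Fin n := ⟨i - 1, hi⟩ with hi0
  -- Step 1: bijection with the set {x i0 = c₀} (x-coordinates only)
  have step1 :
      (∑ ω ∈ Finset.univ.filter
        (fun ω : (Fin l → Bool) × (Fin n → Bool) =>
          ∀ j < l + 1, vFull l n ω.1 ω.2 (i - 1 + j) = g j),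
        probWX l n p ω)
      = ∑ b ∈ Finset.univ.filter (fun b : Fin n → Bool => b i0 = c₀),
          ((2 : ℝ) ^ l)⁻¹ * ∏ m, (if b m then 1 - p else p) := by
    apply Finset.sum_nbij' (i := fun ω => ω.2)
      (j := fun b => ((fun kk : Fin l => recV l (i - 1) g (xext n b) kk), b))
    · -- forward membership
      intro ω hω
      simp only [Finset.mem_filter, Finset.mem_univ, true_and] at hω ⊢
      have h := xext_parity l n ω.1 ω.2 (m := i - 1) hi
      have harg : (fun j : Fin (l + 1) => vFull l n ω.1 ω.2 (i - 1 + j))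
          = fun j : Fin (l + 1) => g j := funext fun j => hω j j.isLt
      rw [harg] at h
      have hx : xext n ω.2 (i - 1) = ω.2 i0 := dif_pos hi
      rw [← hx, h]
    · -- backward membership
      intro b hb
      simp only [Finset.mem_filter, Finset.mem_univ, true_and] at hb ⊢
      intro j hj
      have hc : xext n b (i - 1) = c₀ := by
        rw [show xext n b (i - 1) = b i0 from dif_pos hi, hb]
      have h := vFull_eq_recV (l := l) (i1 := i - 1) (g := g) b hi1n hc
        (i - 1 + j) (by omega)
      rw [h, recV_ge (by omega), show i - 1 + j - (i - 1) = j by omega]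
    · -- left inverse
      intro ω hω
      simp only [Finset.mem_filter, Finset.mem_univ, true_and] at hω
      have hrec := recV_eq_vFull ω.1 ω.2 hi1n hω
      apply Prod.ext
      · funext kk
        have h1 := hrec kk (by have := kk.isLt; omega)
        show recV l (i - 1) g (xext n ω.2) kk = ω.1 kk
        rw [h1, vFull_lt l n ω.1 ω.2 kk.isLt, Fin.eta]
      · rfl
    · -- right inverse
      intro b hb
      rfl
    · -- summand equality
      intro ω hω
      rfl
  rw [step1]
  -- Step 2: compute the x-sum
  classical
  set t : Fin n → Finset Bool := fun m => if m = i0 then {c₀} else Finset.univ with ht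
  have hfil : Finset.univ.filter (fun b : Fin n → Bool => b i0 = c₀) = Fintype.piFinset t := by
    ext b
    simp only [Finset.mem_filter, Finset.mem_univ, true_and, Fintype.mem_piFinset]
    constructor
    · intro h m
      by_cases hm : m = i0
      · subst hm; simp [ht, h]
      · simp [ht, hm]
    · intro h
      have := h i0
      simpa [ht] using this
  rw [hfil, ← Finset.mul_sum, ← Finset.prod_univ_sum t (fun _ c => if c then 1 - p else p)]
  have hfac : ∀ m : Fin n, (∑ c ∈ t m, (if c then 1 - p else p))
      = (if m = i0 then (if c₀ then 1 - p else p) else 1) := by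
    intro m
    by_cases hm : m = i0
    · subst hm; simp [ht]
    · simp only [ht, if_neg hm]
      rw [show (Finset.univ : Finset Bool) = {true, false} by rfl]
      (simp; try ring)
  rw [Finset.prod_congr rfl (fun m _ => hfac m), Finset.prod_ite_eq']
  simp only [Finset.mem_univ, if_true]
  -- Step 3: identify c₀ with the parity of the sum
  have hpar : c₀ = true ↔ Odd (∑ j ∈ Finset.range (l + 1), (if g j then 1 else 0 : ℕ)) := by
    rw [hc₀, parity_true_iff, List.map_ofFn, List.sum_ofFn]
    rw [show (∑ j : Fin (l + 1), ((fun b => if b then (1:ℕ) else 0) ∘ fun j : Fin (l+1) => g j) j)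
        = ∑ j ∈ Finset.range (l + 1), (if g j then 1 else 0 : ℕ) from
      Fin.sum_univ_eq_sum_range (fun j => if g j then 1 else 0) (l + 1)]
  by_cases hev : Even (∑ j ∈ Finset.range (l + 1), (if g j then 1 else 0 : ℕ))
  · have hc : c₀ = false := by
      rw [← Bool.not_eq_true, hpar]
      exact Nat.not_odd_iff_even.mpr hev
    rw [hc, if_pos hev]
    norm_num
  · have hc : c₀ = true := hpar.mpr (Nat.not_even_iff_odd.mp hev)
    rw [hc, if_neg hev]
    norm_num
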